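/- arXiv:1204.3771 — 5 statements merged into one kernel-verified Lean document; each statement's English description precedes it below -/
import Mathlib

section
/- For every integer n ≥ 2, ∑_{k=1}^{n−2} 2^k · ∑_{b=1}^{n−2} [ (3·2^b + b² − 3)·( C(2n−b−k−4, n−b−2) − C(2n−b−k−4, n−2) ) + 2^{n−b−2} · ∑_{j=1}^{b} (j−1)²·( C(n+b−j−k−2, n−k−2) − C(n+b−j−k−2, n−2) ) ] + 2^{2n+1} − (n+3)·2^n + 2·C(2n,n) = (3n+5)·2^{2n−2} − 2(3n−1)·C(2n−2, n−1). -/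
/-!
Write `ν = n - 2`. For fixed `b` (and `j`) the `k`-sum has the shape
`∑ₖ 2ᵏ (C(r + ν - k, r) - C(r + ν - k, ν))`, which Pascal's rule collapses to `2 Q_ν(r)` with
`Q_ν(r) = ∑_{r < i ≤ ν} C(r + ν, i)` (`binomTail ν r`). Reindexing turns the triple sum into
`∑_{t < ν} (12·2^(ν-t) - 4(ν-t) - 12) Q_ν(t)`. Since `Q_ν(t+1) = 2 Q_ν(t) - C(t + 1 + ν, ν)`,
summation by parts leaves only `∑ₐ C(a+ν, ν)`, `∑ₐ a C(a+ν, ν)` and `∑ₐ a 2^(ν-a) C(a+ν, ν)`,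
each of hockey-stick type, and `∑_{i ≤ ν} C(2ν+1, i) = 4^ν` finishes the computation.
-/

/-- The binomial coefficient `C(m, r)` for integer arguments, with the convention
that `C(m, r) = 0` when `r < 0` or `r > m`. -/
def intChoose (m r : ℤ) : ℤ :=
  if 0 ≤ r ∧ r ≤ m then ((m.toNat).choose r.toNat : ℤ) else 0

open Finset

lemma intChoose_natCast (m r : ℕ) : intChoose m r = m.choose r := by
  unfold intChoose
  split_ifs with h
  · simp
  · rw [Nat.choose_eq_zero_of_lt (by omega), Nat.cast_zero]

lemma intChoose_eq_choose {m r : ℤ} {M R : ℕ} (hm : m = M) (hr : r = R) :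
    intChoose m r = M.choose R :=
  hm ▸ hr ▸ intChoose_natCast M R

lemma sum_range_choose_succ (N r : ℕ) :
    ∑ i ∈ range (r + 1), (N + 1).choose i = 2 * ∑ i ∈ range r, N.choose i + N.choose r := by
  induction r with
  | zero => simp
  | succ r ih => rw [sum_range_succ, ih, sum_range_succ, Nat.choose_succ_succ']; ring

lemma sum_Ioc_choose_succ (N : ℕ) {r s : ℕ} (h : r ≤ s) :
    ∑ i ∈ Ioc r s, (N + 1).choose i + N.choose s = 2 * ∑ i ∈ Ioc r s, N.choose i + N.choose r := by
  induction s, h using Nat.le_induction with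
  | base => simp
  | succ s hs ih =>
    rw [sum_Ioc_succ_top hs, sum_Ioc_succ_top hs, Nat.choose_succ_succ']
    linarith

lemma sum_Icc_one_eq_sum_range {M : Type*} [AddCommMonoid M] (f : ℕ → M) (K : ℕ) :
    ∑ k ∈ Icc 1 K, f k = ∑ m ∈ range K, f (m + 1) := by
  rw [range_eq_Ico, sum_Ico_add' f 0 K 1, ← Ico_add_one_right_eq_Icc]

lemma sum_Icc_two_pow_mul_choose_sub_choose {r s : ℕ} (h : r ≤ s) (K : ℕ) :
    ∑ k ∈ Icc 1 K, (2:ℤ) ^ k * ((r + (K - k)).choose r - (r + (K - k)).choose s)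
      = 2 * ∑ i ∈ Ioc r s, ((r + K).choose i : ℤ) := by
  induction K with
  | zero =>
    rw [Icc_eq_empty (by omega), sum_empty, sum_eq_zero fun i hi => ?_, mul_zero]
    rw [Nat.choose_eq_zero_of_lt (by simp at hi; omega), Nat.cast_zero]
  | succ K ih =>
    have pascal : ∑ i ∈ Ioc r s, ((r + K + 1).choose i : ℤ) + (r + K).choose s
        = 2 * ∑ i ∈ Ioc r s, ((r + K).choose i : ℤ) + (r + K).choose r := by
      exact_mod_cast sum_Ioc_choose_succ (r + K) h
    rw [sum_Icc_one_eq_sum_range] at ih ⊢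
    rw [sum_range_succ', ← add_assoc r K 1]
    simp only [Nat.add_sub_add_right, Nat.sub_zero] at ih ⊢
    have shift : ∑ m ∈ range K, (2:ℤ) ^ (m + 1 + 1) *
          ((r + (K - (m + 1))).choose r - (r + (K - (m + 1))).choose s : ℤ)
        = 2 * ∑ m ∈ range K, (2:ℤ) ^ (m + 1) *
          ((r + (K - (m + 1))).choose r - (r + (K - (m + 1))).choose s : ℤ) := by
      rw [mul_sum]
      exact sum_congr rfl fun m _ => by ring
    rw [shift, ih]
    linear_combination -2 * pascal

def binomTail (ν a : ℕ) : ℤ := ∑ i ∈ Ioc a ν, ((a + ν).choose i : ℤ)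

lemma binomTail_self (ν : ℕ) : binomTail ν ν = 0 := by
  simp [binomTail]

lemma binomTail_zero (ν : ℕ) : binomTail ν 0 = 2 ^ ν - 1 := by
  have h := Nat.sum_range_choose ν
  rw [Nat.range_succ_eq_Icc_zero, ← Ioc_insert_left (Nat.zero_le ν),
    sum_insert left_notMem_Ioc, Nat.choose_zero_right] at h
  rw [binomTail, zero_add]
  linear_combination (norm := push_cast) (congrArg (Nat.cast : ℕ → ℤ) h)
  ring

lemma binomTail_succ {ν a : ℕ} (ha : a < ν) :
    binomTail ν (a + 1) = 2 * binomTail ν a - (a + 1 + ν).choose ν := by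
  have pascal : ∑ i ∈ Ioc (a + 1) ν, ((a + ν + 1).choose i : ℤ) + (a + ν).choose ν
      = 2 * ∑ i ∈ Ioc (a + 1) ν, ((a + ν).choose i : ℤ) + (a + ν).choose (a + 1) := by
    exact_mod_cast sum_Ioc_choose_succ (a + ν) ha
  rw [binomTail, binomTail, ← Icc_add_one_left_eq_Ioc a, ← Ioc_insert_left ha,
    sum_insert left_notMem_Ioc, ← Nat.choose_symm_add, add_right_comm a 1 ν,
    Nat.choose_succ_succ']
  rw [← Nat.choose_symm_add] at pascal
  push_cast
  linear_combination pascal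

lemma sum_range_mul_succ_sub_mul {R : Type*} [CommRing R] (c : R) (ψ f : ℕ → R) (M : ℕ) :
    ∑ t ∈ range M, (c * ψ (t + 1) - ψ t) * f t
      = ψ M * f M - ψ 0 * f 0 + ∑ t ∈ range M, ψ (t + 1) * (c * f t - f (t + 1)) := by
  induction M with
  | zero => simp
  | succ M ih => rw [sum_range_succ, sum_range_succ, ih]; ring

lemma sum_range_mul_pow_succ_sub {R : Type*} [CommSemiring R] (f : ℕ → R) (x : R) (m : ℕ) :
    ∑ u ∈ range (m + 1), f u * x ^ (m + 1 - u) = x * ∑ u ∈ range (m + 1), f u * x ^ (m - u) := by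
  rw [mul_sum]
  refine sum_congr rfl fun u hu => ?_
  rw [Nat.sub_add_comm (mem_range_succ_iff.mp hu), pow_succ]
  ring

lemma add_one_mul_choose_add_one (M c : ℕ) :
    (c + 1) * (M + c + 1).choose (c + 1) = (M + 1) * (M + c + 1).choose c := by
  have h := Nat.choose_succ_right_eq (M + c + 1) c
  rw [show M + c + 1 - c = M + 1 by omega] at h
  linarith

lemma sum_range_mul_choose_add (c M : ℕ) :
    ∑ a ∈ range (M + 1), a * (a + c).choose c = (c + 1) * (M + c + 1).choose (c + 2) := by
  induction M with
  | zero => simp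
  | succ M ih =>
    rw [sum_range_succ, ih, show M + 1 + c + 1 = (M + c + 1) + 1 by ring,
      Nat.choose_succ_succ' (M + c + 1) (c + 1), show M + 1 + c = M + c + 1 by ring,
      ← add_one_mul_choose_add_one]
    ring

lemma sum_range_mul_two_pow_mul_choose_add (c M : ℕ) :
    ∑ a ∈ range (M + 1), a * (a + c).choose c * 2 ^ (M - a)
      = (c + 1) * ∑ i ∈ range M, (M + c + 1).choose i := by
  induction M with
  | zero => simp
  | succ M ih =>
    have shift := sum_range_mul_pow_succ_sub (fun a => a * (a + c).choose c) 2 M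
    rw [sum_range_succ, shift, ih, show M + 1 + c + 1 = (M + c + 1) + 1 by ring,
      sum_range_choose_succ, Nat.sub_self, pow_zero, mul_one, show M + 1 + c = M + c + 1 by ring,
      Nat.choose_symm_of_eq_add (show M + c + 1 = M + (c + 1) by ring),
      ← add_one_mul_choose_add_one]
    ring

lemma sum_range_sq_mul_two_pow (m : ℕ) :
    ∑ u ∈ range m, (u : ℤ) ^ 2 * 2 ^ (m - u) = 6 * 2 ^ m - 2 * ((m : ℤ) ^ 2 + 2 * m + 3) := by
  induction m with
  | zero => simp
  | succ m ih =>
    rw [sum_range_mul_pow_succ_sub (fun u => (u : ℤ) ^ 2) (2 : ℤ), sum_range_succ, ih, Nat.sub_self]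
    push_cast
    ring

lemma sum_Icc_one_sub_eq_sum_range {M : Type*} [AddCommMonoid M] (F : ℕ → ℕ → M) (n : ℕ) :
    ∑ k ∈ Icc 1 n, F k (n - k) = ∑ t ∈ range n, F (n - t) t := by
  refine sum_nbij' (n - ·) (n - ·) ?_ ?_ ?_ ?_ ?_ <;> intro x hx <;> simp at hx
  all_goals first | simp; omega | congr; omega

lemma sum_Icc_sum_Icc_eq_sum_range_sum_range {M : Type*} [AddCommMonoid M] (F : ℕ → ℕ → M) (ν : ℕ) :
    ∑ b ∈ Icc 1 ν, ∑ j ∈ Icc 1 b, F b j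
      = ∑ a ∈ range ν, ∑ u ∈ range (ν - a), F (a + u + 1) (u + 1) := by
  rw [sum_sigma', sum_sigma']
  refine sum_bij' (fun x _ => ⟨x.1 - x.2, x.2 - 1⟩) (fun y _ => ⟨y.1 + y.2 + 1, y.2 + 1⟩)
    ?_ ?_ ?_ ?_ ?_ <;> rintro ⟨x, y⟩ h <;> simp at h
  all_goals simp only [mem_sigma, mem_range, mem_Icc, Sigma.mk.injEq, heq_eq_eq]
  all_goals first | omega | congr 1 <;> omega

lemma sum_Icc_weights_eq_sum_range (ν : ℕ) (Q : ℕ → ℤ) :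
    ∑ b ∈ Icc 1 ν, ((3 * 2 ^ b + (b : ℤ) ^ 2 - 3) * (2 * Q (ν - b))
        + 2 ^ (ν - b) * ∑ j ∈ Icc 1 b, ((j : ℤ) - 1) ^ 2 * (2 * Q (b - j)))
      = ∑ t ∈ range ν, (12 * 2 ^ (ν - t) - 4 * ((ν - t : ℕ) : ℤ) - 12) * Q t := by
  have inner : ∑ b ∈ Icc 1 ν, 2 ^ (ν - b) * ∑ j ∈ Icc 1 b, ((j : ℤ) - 1) ^ 2 * (2 * Q (b - j))
      = ∑ a ∈ range ν, (∑ u ∈ range (ν - a), (u : ℤ) ^ 2 * 2 ^ (ν - a - u)) * Q a := by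
    simp only [mul_sum]
    rw [sum_Icc_sum_Icc_eq_sum_range_sum_range]
    refine sum_congr rfl fun a _ => ?_
    rw [sum_mul]
    refine sum_congr rfl fun u hu => ?_
    rw [mem_range] at hu
    rw [show ν - a - u = ν - (a + u + 1) + 1 by omega, Nat.add_sub_add_right, Nat.add_sub_cancel]
    push_cast
    ring
  rw [sum_add_distrib, inner,
    sum_Icc_one_sub_eq_sum_range (fun b t => (3 * 2 ^ b + (b : ℤ) ^ 2 - 3) * (2 * Q t)),
    ← sum_add_distrib]
  refine sum_congr rfl fun t _ => ?_
  rw [sum_range_sq_mul_two_pow]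
  ring

lemma sum_range_weights_mul_binomTail (ν : ℕ) :
    ∑ t ∈ range ν, (12 * 2 ^ (ν - t) - 4 * ((ν - t : ℕ) : ℤ) - 12) * binomTail ν t
      = (4 * ν + 20) * 2 ^ ν + 12 * (ν + 1) * 4 ^ ν + 4 * (ν + 1) * (2 * ν + 1).choose (ν + 2)
        - (16 * ν + 32) * (2 * ν + 1).choose (ν + 1) := by
  -- `ψ` solves `2 ψ (t + 1) - ψ t = weight t`; try `ψ t = (α t + β) 2 ^ (ν - t) + γ t + δ`.
  set ψ : ℕ → ℤ := fun t => 12 * t * 2 ^ (ν - t) + 4 * t - 4 * ν - 20 with hψ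
  have weight : ∀ t ∈ range ν,
      (12 * 2 ^ (ν - t) - 4 * ((ν - t : ℕ) : ℤ) - 12) * binomTail ν t
        = (2 * ψ (t + 1) - ψ t) * binomTail ν t := by
    intro t ht
    have ht := mem_range.mp ht
    simp only [hψ]
    rw [Nat.cast_sub ht.le, show ν - t = ν - (t + 1) + 1 by omega, pow_succ]
    push_cast
    ring
  have tail : ∀ t ∈ range ν, ψ (t + 1) * (2 * binomTail ν t - binomTail ν (t + 1))
      = ψ (t + 1) * (t + 1 + ν).choose ν := by
    intro t ht
    rw [binomTail_succ (mem_range.mp ht)]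
    ring
  have shift := sum_range_succ' (fun a => ψ a * (a + ν).choose ν) ν
  have split : ∑ a ∈ range (ν + 1), ψ a * (a + ν).choose ν
      = 12 * ∑ a ∈ range (ν + 1), (a : ℤ) * (a + ν).choose ν * 2 ^ (ν - a)
        + 4 * ∑ a ∈ range (ν + 1), (a : ℤ) * (a + ν).choose ν
        - (4 * ν + 20) * ∑ a ∈ range (ν + 1), ((a + ν).choose ν : ℤ) := by
    simp only [mul_sum, ← sum_add_distrib, ← sum_sub_distrib]
    exact sum_congr rfl fun a _ => by ring
  have two_pow_sum : ∑ a ∈ range (ν + 1), (a : ℤ) * (a + ν).choose ν * 2 ^ (ν - a)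
      = (ν + 1) * ∑ i ∈ range ν, ((2 * ν + 1).choose i : ℤ) := by
    rw [two_mul]
    exact_mod_cast sum_range_mul_two_pow_mul_choose_add ν ν
  have linear_sum : ∑ a ∈ range (ν + 1), (a : ℤ) * (a + ν).choose ν
      = (ν + 1) * (2 * ν + 1).choose (ν + 2) := by
    rw [two_mul]
    exact_mod_cast sum_range_mul_choose_add ν ν
  have hockey : ∑ a ∈ range (ν + 1), ((a + ν).choose ν : ℤ) = (2 * ν + 1).choose (ν + 1) := by
    rw [two_mul]
    exact_mod_cast Nat.sum_range_add_choose ν ν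
  have halfway :
      ∑ i ∈ range ν, ((2 * ν + 1).choose i : ℤ) + (2 * ν + 1).choose (ν + 1) = 4 ^ ν := by
    have h := Nat.sum_range_choose_halfway ν
    rw [sum_range_succ, ← Nat.choose_symm_half] at h
    exact_mod_cast h
  rw [sum_congr rfl weight, sum_range_mul_succ_sub_mul, sum_congr rfl tail, binomTail_self,
    binomTail_zero]
  simp only [hψ, Nat.cast_zero, zero_add, Nat.choose_self] at shift split ⊢
  linear_combination -shift + split + 12 * two_pow_sum + 4 * linear_sum - (4 * ν + 20) * hockey
    + 12 * (ν + 1) * halfway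

lemma sum_Icc_intChoose_eq_sum_binomTail (n : ℕ) :
    ∑ k ∈ Icc 1 (n - 2), (2:ℤ) ^ k *
        ∑ b ∈ Icc 1 (n - 2),
          ((3 * 2 ^ b + (b : ℤ) ^ 2 - 3) *
              (intChoose (2 * (n:ℤ) - b - k - 4) ((n:ℤ) - b - 2) -
                intChoose (2 * (n:ℤ) - b - k - 4) ((n:ℤ) - 2)) +
            2 ^ (n - b - 2) *
              ∑ j ∈ Icc 1 b, ((j : ℤ) - 1) ^ 2 *
                (intChoose ((n:ℤ) + b - j - k - 2) ((n:ℤ) - k - 2) -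
                  intChoose ((n:ℤ) + b - j - k - 2) ((n:ℤ) - 2)))
      = ∑ b ∈ Icc 1 (n - 2),
          ((3 * 2 ^ b + (b : ℤ) ^ 2 - 3) * (2 * binomTail (n - 2) (n - 2 - b))
            + 2 ^ (n - 2 - b) *
              ∑ j ∈ Icc 1 b, ((j : ℤ) - 1) ^ 2 * (2 * binomTail (n - 2) (b - j))) := by
  simp only [mul_sum (Icc 1 (n - 2))]
  rw [sum_comm]
  refine sum_congr rfl fun b hb => ?_
  have hb := mem_Icc.mp hb
  have collapse : ∀ r ≤ n - 2, ∑ k ∈ Icc 1 (n - 2),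
      (2:ℤ) ^ k * ((r + (n - 2 - k)).choose r - (r + (n - 2 - k)).choose (n - 2))
        = 2 * binomTail (n - 2) r :=
    fun r hr => sum_Icc_two_pow_mul_choose_sub_choose hr (n - 2)
  have outer : ∀ k ∈ Icc 1 (n - 2),
      intChoose (2 * (n:ℤ) - b - k - 4) ((n:ℤ) - b - 2)
          - intChoose (2 * (n:ℤ) - b - k - 4) ((n:ℤ) - 2)
        = ((n - 2 - b + (n - 2 - k)).choose (n - 2 - b) : ℤ)
          - (n - 2 - b + (n - 2 - k)).choose (n - 2) := by
    intro k hk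
    have hk := mem_Icc.mp hk
    congr 1 <;> exact intChoose_eq_choose (by omega) (by omega)
  have inner : ∀ j ∈ Icc 1 b, ∀ k ∈ Icc 1 (n - 2),
      ((j : ℤ) - 1) ^ 2 * (intChoose ((n:ℤ) + b - j - k - 2) ((n:ℤ) - k - 2)
          - intChoose ((n:ℤ) + b - j - k - 2) ((n:ℤ) - 2))
        = ((j : ℤ) - 1) ^ 2 * (((b - j + (n - 2 - k)).choose (b - j) : ℤ)
          - (b - j + (n - 2 - k)).choose (n - 2)) := by
    intro j hj k hk
    have := mem_Icc.mp hj
    have := mem_Icc.mp hk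
    rw [intChoose_eq_choose (M := b - j + (n - 2 - k)) (R := n - 2 - k) (by omega) (by omega),
      intChoose_eq_choose (M := b - j + (n - 2 - k)) (R := n - 2) (by omega) (by omega),
      Nat.choose_symm_add]
  calc _ = ∑ k ∈ Icc 1 (n - 2), ((3 * 2 ^ b + (b : ℤ) ^ 2 - 3) * ((2:ℤ) ^ k *
            (((n - 2 - b + (n - 2 - k)).choose (n - 2 - b) : ℤ)
              - (n - 2 - b + (n - 2 - k)).choose (n - 2)))
          + 2 ^ (n - 2 - b) * ∑ j ∈ Icc 1 b, ((j : ℤ) - 1) ^ 2 * ((2:ℤ) ^ k *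
            (((b - j + (n - 2 - k)).choose (b - j) : ℤ)
              - (b - j + (n - 2 - k)).choose (n - 2)))) := by
        refine sum_congr rfl fun k hk => ?_
        rw [outer k hk, Nat.sub_right_comm n b 2, sum_congr rfl fun j hj => inner j hj k hk,
          mul_add, mul_left_comm, mul_left_comm _ (2 ^ (n - 2 - b) : ℤ), mul_sum]
        simp only [mul_left_comm ((2:ℤ) ^ k)]
    _ = _ := by
        rw [sum_add_distrib, ← mul_sum, collapse _ (by omega), ← mul_sum, sum_comm]
        congr 2
        refine sum_congr rfl fun j hj => ?_
        rw [← mul_sum, collapse _ (by have := mem_Icc.mp hj; omega)]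

lemma choose_two_mul_add_two_succ (ν : ℕ) :
    (2 * ν + 2).choose (ν + 1) = 2 * (2 * ν + 1).choose (ν + 1) := by
  rw [Nat.choose_succ_succ', Nat.choose_symm_half]
  ring

lemma choose_two_mul_add_four (ν : ℕ) :
    (2 * ν + 4).choose (ν + 2)
      = 2 * (2 * ν + 1).choose (ν + 2) + 6 * (2 * ν + 1).choose (ν + 1) := by
  have h : (2 * ν + 2).choose (ν + 2) = (2 * ν + 2).choose ν :=
    Nat.choose_symm_of_eq_add (by ring)
  rw [Nat.choose_succ_succ', Nat.choose_succ_succ' (2 * ν + 2), Nat.choose_succ_succ' (2 * ν + 2),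
    ← h, Nat.choose_succ_succ' (2 * ν + 1) (ν + 1), choose_two_mul_add_two_succ]
  ring

lemma choose_two_mul_add_one_add_two_mul (ν : ℕ) :
    (2 * ν + 1).choose (ν + 2) * (ν + 2) = (2 * ν + 1).choose (ν + 1) * ν := by
  simpa [show 2 * ν + 1 - (ν + 1) = ν by omega] using Nat.choose_succ_right_eq (2 * ν + 1) (ν + 1)

theorem sum_formula_basic_ideals (n : ℕ) (hn : 2 ≤ n) :
    (∑ k ∈ Finset.Icc 1 (n-2), (2:ℤ)^k *
        ∑ b ∈ Finset.Icc 1 (n-2),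
          ((3 * 2^b + (b : ℤ)^2 - 3) *
              (intChoose (2*(n:ℤ) - b - k - 4) ((n:ℤ) - b - 2) -
                intChoose (2*(n:ℤ) - b - k - 4) ((n:ℤ) - 2)) +
            2^(n-b-2) *
              ∑ j ∈ Finset.Icc 1 b, ((j : ℤ) - 1)^2 *
                (intChoose ((n:ℤ) + b - j - k - 2) ((n:ℤ) - k - 2) -
                  intChoose ((n:ℤ) + b - j - k - 2) ((n:ℤ) - 2)))) +
      2^(2*n+1) - ((n:ℤ) + 3) * 2^n + 2 * ((2*n).choose n : ℤ) =
    (3*(n:ℤ) + 5) * 2^(2*n-2) - 2*(3*(n:ℤ) - 1) * ((2*n-2).choose (n-1) : ℤ) := by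
  rw [sum_Icc_intChoose_eq_sum_binomTail, sum_Icc_weights_eq_sum_range,
    sum_range_weights_mul_binomTail]
  obtain ⟨ν, rfl⟩ := Nat.exists_eq_add_of_le' hn
  rw [Nat.add_sub_cancel, show 2 * (ν + 2) = 2 * ν + 4 by ring,
    show 2 * ν + 4 - 2 = 2 * ν + 2 by omega, show ν + 2 - 1 = ν + 1 by omega,
    choose_two_mul_add_four, choose_two_mul_add_two_succ]
  have four_pow : (4:ℤ) ^ ν = 2 ^ (2 * ν) := by rw [pow_mul]; norm_num
  have ratio : ((2 * ν + 1).choose (ν + 2) : ℤ) * (ν + 2) = (2 * ν + 1).choose (ν + 1) * ν := by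
    exact_mod_cast choose_two_mul_add_one_add_two_mul ν
  push_cast
  linear_combination 12 * (ν + 1) * four_pow + 4 * ratio
end

section
/- For every integer n ≥ 1, the number of B_{n+1}-paths equals 4 times the number of B_n-paths minus 2 times the n-th Catalan number C(2n,n)/(n+1). -/
/-!
Read a `B_n`-path as a ballot word in `true`/`false` (`r`/`f`). Appending a letter to a ballot
word of length `m` gives a ballot word of length `m + 1`, except when the word is balanced and
the letter is `false`; hence `b (m + 1) = 2 b m - d m`, where `d m` counts the balanced ballot
words of length `m`. These are the Dyck words, so `d (2n + 1) = 0` and `d (2n) = catalan n`, and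
two steps of the recursion give `b (2n + 2) = 4 b (2n) - 2 catalan n`.
-/

/-- A `B_n`-path: a word of length `2n` over the alphabet `{r, f}` (here `true` stands
for `r` and `false` for `f`) such that every prefix contains at least as many `r`'s
as `f`'s. -/
def BPaths (n : ℕ) : Finset (Fin (2*n) → Bool) :=
  Finset.univ.filter fun w =>
    ∀ m : Fin (2*n + 1),
      (Finset.univ.filter fun i : Fin (2*n) => (i : ℕ) < (m : ℕ) ∧ w i = false).card ≤
      (Finset.univ.filter fun i : Fin (2*n) => (i : ℕ) < (m : ℕ) ∧ w i = true).card

open Finset DyckStep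

theorem List.count_ofFn {α : Type*} [DecidableEq α] {N : ℕ} (w : Fin N → α) (a : α) :
    (List.ofFn w).count a = #{i | w i = a} := by
  rw [← Multiset.coe_count, ← Fin.univ_val_map, Multiset.count_map, Finset.card_def,
    Finset.filter_val]
  simp_rw [eq_comm]

theorem List.count_take_ofFn {α : Type*} [DecidableEq α] {N k : ℕ} (hk : k ≤ N)
    (w : Fin N → α) (a : α) :
    ((List.ofFn w).take k).count a = #{i : Fin N | (i : ℕ) < k ∧ w i = a} := by
  rw [← Fin.ofFn_take_eq_take_ofFn hk, List.count_ofFn]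
  refine card_nbij (Fin.castLE hk) (fun i hi => ?_) (Fin.castLE_injective hk).injOn
    (fun j hj => ?_)
  · rw [mem_coe, mem_filter_univ] at hi ⊢
    exact ⟨i.2, hi⟩
  · rw [mem_coe, mem_filter_univ] at hj
    exact ⟨⟨j, hj.1⟩, (mem_filter_univ _).2 hj.2, rfl⟩

theorem List.ofFn_snoc {α : Type*} {m : ℕ} (w : Fin m → α) (a : α) :
    List.ofFn (Fin.snoc w a : Fin (m + 1) → α) = List.ofFn w ++ [a] := by
  rw [List.ofFn_succ']
  simp only [Fin.snoc_castSucc, Fin.snoc_last, List.concat_eq_append]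

theorem List.exists_ofFn_eq {α : Type*} {l : List α} {m : ℕ} (h : l.length = m) :
    ∃ w : Fin m → α, List.ofFn w = l := by
  subst h
  exact ⟨l.get, List.ofFn_get l⟩

def IsBallot (l : List Bool) : Prop :=
  ∀ i, (l.take i).count false ≤ (l.take i).count true

theorem isBallot_iff_forall_le {l : List Bool} :
    IsBallot l ↔ ∀ i ≤ l.length, (l.take i).count false ≤ (l.take i).count true :=
  ⟨fun h i _ => h i, fun h i => (le_or_gt i l.length).elim (h i)
    fun hi => by simpa [List.take_of_length_le hi.le] using h l.length le_rfl⟩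

instance : DecidablePred IsBallot := fun _ => decidable_of_iff _ isBallot_iff_forall_le.symm

theorem IsBallot.count_false_le {l : List Bool} (h : IsBallot l) :
    l.count false ≤ l.count true := by
  simpa using h l.length

theorem isBallot_append_singleton {l : List Bool} {b : Bool} :
    IsBallot (l ++ [b]) ↔ IsBallot l ∧ (b = false → l.count false < l.count true) := by
  constructor
  · intro h
    refine ⟨fun i => ?_, fun hb => ?_⟩
    · rcases le_or_gt i l.length with hi | hi
      · simpa [List.take_append_of_le_length hi] using h i
      · simpa [List.take_of_length_le hi.le] using h l.length
    · subst hb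
      have := h (l.length + 1)
      rw [List.take_of_length_le (by simp)] at this
      simpa [List.count_append] using this
  · rintro ⟨h, hb⟩ i
    rcases le_or_gt i l.length with hi | hi
    · simpa [List.take_append_of_le_length hi] using h i
    · rw [List.take_of_length_le (by simp; omega)]
      have := h.count_false_le
      cases b <;> simp [hb]; omega

theorem IsBallot.not_append_singleton_iff {l : List Bool} (hl : IsBallot l) {b : Bool} :
    ¬ IsBallot (l ++ [b]) ↔ b = false ∧ l.count true = l.count false := by
  have := hl.count_false_le
  rw [isBallot_append_singleton]
  cases b <;> simp [hl]; omega

def ballotTuples (m : ℕ) : Finset (Fin m → Bool) := {w | IsBallot (List.ofFn w)}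

theorem mem_ballotTuples {m : ℕ} {w : Fin m → Bool} :
    w ∈ ballotTuples m ↔ IsBallot (List.ofFn w) :=
  mem_filter_univ w

theorem BPaths_eq_ballotTuples (n : ℕ) : BPaths n = ballotTuples (2 * n) := by
  ext w
  rw [BPaths, mem_filter_univ, mem_ballotTuples, isBallot_iff_forall_le, List.length_ofFn]
  constructor
  · intro h i hi
    rw [List.count_take_ofFn hi, List.count_take_ofFn hi]
    exact h ⟨i, by omega⟩
  · intro h m
    rw [← List.count_take_ofFn (by omega), ← List.count_take_ofFn (by omega)]
    exact h m (by omega)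

theorem card_ballotTuples_succ_add (m : ℕ) :
    #(ballotTuples (m + 1)) +
        #{w ∈ ballotTuples m | (List.ofFn w).count true = (List.ofFn w).count false} =
      2 * #(ballotTuples m) := by
  set A := ballotTuples m ×ˢ (univ : Finset Bool)
  have mem_A {p} : p ∈ A ↔ IsBallot (List.ofFn p.1) := by
    simp only [A, mem_product, mem_univ, and_true, mem_ballotTuples]
  have hgood : #{p ∈ A | IsBallot (List.ofFn p.1 ++ [p.2])} = #(ballotTuples (m + 1)) := by
    refine card_nbij' (fun p => Fin.snoc p.1 p.2) (fun v => (Fin.init v, v (Fin.last m)))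
      (fun p hp => ?_) (fun v hv => ?_) (fun p _ => ?_) (fun v _ => Fin.snoc_init_self v)
    · rw [mem_coe, mem_filter] at hp
      rw [mem_coe, mem_ballotTuples, List.ofFn_snoc]
      exact hp.2
    · rw [mem_coe, mem_ballotTuples, ← Fin.snoc_init_self v, List.ofFn_snoc] at hv
      rw [mem_coe, mem_filter, mem_A]
      exact ⟨(isBallot_append_singleton.1 hv).1, hv⟩
    · simp only [Fin.init_snoc, Fin.snoc_last]
  have hbad : #{p ∈ A | ¬ IsBallot (List.ofFn p.1 ++ [p.2])} =
      #{w ∈ ballotTuples m | (List.ofFn w).count true = (List.ofFn w).count false} := by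
    refine card_nbij' Prod.fst (fun w => (w, false)) (fun p hp => ?_) (fun w hw => ?_)
      (fun p hp => ?_) (fun w _ => rfl)
    · simp only [mem_coe, mem_filter, mem_A, mem_ballotTuples] at hp ⊢
      exact ⟨hp.1, (hp.1.not_append_singleton_iff.1 hp.2).2⟩
    · simp only [mem_coe, mem_filter, mem_A, mem_ballotTuples] at hw ⊢
      exact ⟨hw.1, hw.1.not_append_singleton_iff.2 ⟨rfl, hw.2⟩⟩
    · simp only [mem_coe, mem_filter, mem_A] at hp
      rw [← (hp.1.not_append_singleton_iff.1 hp.2).1]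
  rw [← hgood, ← hbad, card_filter_add_card_filter_not, card_product, card_univ,
    Fintype.card_bool, mul_comm]

theorem card_balanced_ballotTuples_two_mul_add_one (n : ℕ) :
    #{w ∈ ballotTuples (2 * n + 1) | (List.ofFn w).count true = (List.ofFn w).count false} =
      0 := by
  refine card_eq_zero.2 (filter_eq_empty_iff.2 fun w _ hc => ?_)
  have hlen := List.count_true_add_count_false (List.ofFn w)
  rw [List.length_ofFn] at hlen
  omega

def boolEquivDyckStep : Bool ≃ DyckStep where
  toFun b := if b then U else D
  invFun s := s = U
  left_inv b := by cases b <;> rfl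
  right_inv s := by cases s <;> rfl

theorem count_map_boolEquivDyckStep (l : List Bool) (b : Bool) :
    (l.map boolEquivDyckStep).count (boolEquivDyckStep b) = l.count b :=
  List.count_map_of_injective _ _ boolEquivDyckStep.injective b

def DyckWord.ofBallot (l : List Bool) (hl : IsBallot l) (hc : l.count true = l.count false) :
    DyckWord where
  toList := l.map boolEquivDyckStep
  count_U_eq_count_D :=
    (count_map_boolEquivDyckStep l true).trans (hc.trans (count_map_boolEquivDyckStep l false).symm)
  count_D_le_count_U i := by
    rw [← List.map_take]
    exact (count_map_boolEquivDyckStep _ false).trans_le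
      ((hl i).trans_eq (count_map_boolEquivDyckStep _ true).symm)

theorem DyckWord.isBallot_map_symm (p : DyckWord) :
    IsBallot (p.toList.map boolEquivDyckStep.symm) := by
  intro i
  rw [← List.map_take]
  exact (List.count_map_of_injective _ _ boolEquivDyckStep.symm.injective D).trans_le
    ((p.count_D_le_count_U i).trans_eq
      (List.count_map_of_injective _ _ boolEquivDyckStep.symm.injective U).symm)

theorem card_balanced_ballotTuples_two_mul (n : ℕ) :
    #{w ∈ ballotTuples (2 * n) | (List.ofFn w).count true = (List.ofFn w).count false} =
      catalan n := by
  rw [← DyckWord.card_dyckWord_semilength_eq_catalan, ← card_univ]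
  refine card_bij (fun w hw => ⟨DyckWord.ofBallot (List.ofFn w)
      (mem_ballotTuples.1 (mem_filter.1 hw).1) (mem_filter.1 hw).2, ?_⟩)
    (fun _ _ => mem_univ _) (fun w₁ _ w₂ _ h => ?_) (fun p _ => ?_)
  · have hc := (mem_filter.1 hw).2
    have hlen := List.count_true_add_count_false (List.ofFn w)
    rw [List.length_ofFn] at hlen
    exact (count_map_boolEquivDyckStep _ true).trans (by omega)
  · exact List.ofFn_injective (List.map_injective_iff.2 boolEquivDyckStep.injective
      (congrArg (fun p => p.1.toList) h))
  · have hlen : (p.1.toList.map boolEquivDyckStep.symm).length = 2 * n := by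
      rw [List.length_map, ← p.1.two_mul_semilength_eq_length, p.2]
    obtain ⟨w, hw⟩ := List.exists_ofFn_eq hlen
    have hc : (List.ofFn w).count true = (List.ofFn w).count false := by
      rw [hw]
      exact (List.count_map_of_injective _ _ boolEquivDyckStep.symm.injective U).trans
        (p.1.count_U_eq_count_D.trans
          (List.count_map_of_injective _ _ boolEquivDyckStep.symm.injective D).symm)
    refine ⟨w, mem_filter.2 ⟨mem_ballotTuples.2 (hw ▸ p.1.isBallot_map_symm), hc⟩, ?_⟩
    apply Subtype.ext
    apply DyckWord.ext
    change (List.ofFn w).map boolEquivDyckStep = p.1.toList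
    rw [hw, List.map_map, Equiv.self_comp_symm, List.map_id]

theorem cast_catalan_eq_choose_div (n : ℕ) :
    (catalan n : ℚ) = (2 * n).choose n / (n + 1) := by
  rw [catalan_eq_centralBinom_div, Nat.cast_div (Nat.succ_dvd_centralBinom n) (by positivity),
    Nat.centralBinom_eq_two_mul_choose, Nat.cast_succ]

theorem card_BPaths_succ_general (n : ℕ) :
    ((BPaths (n+1)).card : ℚ) =
      4 * ((BPaths n).card : ℚ) - 2 * (((2*n).choose n : ℚ) / ((n : ℚ) + 1)) := by
  have hodd : #(ballotTuples (2 * n + 2)) = 2 * #(ballotTuples (2 * n + 1)) := by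
    have h := card_ballotTuples_succ_add (2 * n + 1)
    rwa [card_balanced_ballotTuples_two_mul_add_one, add_zero] at h
  have heven : #(ballotTuples (2 * n + 1)) + catalan n = 2 * #(ballotTuples (2 * n)) := by
    have h := card_ballotTuples_succ_add (2 * n)
    rwa [card_balanced_ballotTuples_two_mul] at h
  have key : #(BPaths (n + 1)) + 2 * catalan n = 4 * #(BPaths n) := by
    rw [BPaths_eq_ballotTuples, BPaths_eq_ballotTuples, Nat.mul_succ]
    omega
  rw [← cast_catalan_eq_choose_div, eq_sub_iff_add_eq]
  exact_mod_cast key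

/-- The number of `B_{n+1}`-paths equals four times the number of `B_n`-paths minus
twice the `n`-th Catalan number `C(2n, n)/(n+1)`. -/
theorem card_BPaths_succ (n : ℕ) (hn : 1 ≤ n) :
    ((BPaths (n+1)).card : ℚ) =
      4 * ((BPaths n).card : ℚ) - 2 * (((2*n).choose n : ℚ) / ((n : ℚ) + 1)) :=
  card_BPaths_succ_general n
end

section
/- For all positive integers A and B with A ≥ B, ∑_{ℓ=0}^{A−B} 2^ℓ · C(A−ℓ, B) = ∑_{s=0}^{A−B} C(A+1, s). -/
/-! Write `S(m, n) = ∑_{s ≤ n} C(m, s)` for a partial row sum of Pascal's triangle. Pascal's rule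
gives `S(m + 1, n + 1) = 2 S(m, n) + C(m, n + 1)`, and with `m = B + n + 1` the last term is
`C(B + n + 1, B)` by symmetry. This is exactly the recursion satisfied by the left-hand side when
`A - B` grows by one, so both sides agree by induction on `A - B`. -/

open Finset

theorem Nat.sum_range_succ_choose_succ (m n : ℕ) :
    ∑ s ∈ range (n + 2), (m + 1).choose s =
      2 * ∑ s ∈ range (n + 1), m.choose s + m.choose (n + 1) := by
  rw [sum_range_succ']
  simp only [Nat.choose_succ_succ, sum_add_distrib]
  rw [sum_range_succ (fun s => m.choose (s + 1)), sum_range_succ' (fun s => m.choose s)]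
  simp only [Nat.choose_zero_right]
  ring

theorem Nat.sum_range_two_pow_mul_choose (b n : ℕ) :
    ∑ ℓ ∈ range (n + 1), 2 ^ ℓ * (b + n - ℓ).choose b =
      ∑ s ∈ range (n + 1), (b + n + 1).choose s := by
  induction n with
  | zero => simp
  | succ n ih =>
    calc ∑ ℓ ∈ range (n + 2), 2 ^ ℓ * (b + (n + 1) - ℓ).choose b
        = 2 * ∑ ℓ ∈ range (n + 1), 2 ^ ℓ * (b + n - ℓ).choose b + (b + n + 1).choose b := by
          rw [sum_range_succ', mul_sum, pow_zero, one_mul, Nat.sub_zero, add_assoc b n 1]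
          congr 1
          refine sum_congr rfl fun ℓ _ => ?_
          rw [pow_succ, show b + (n + 1) - (ℓ + 1) = b + n - ℓ by omega]
          ring
      _ = 2 * ∑ s ∈ range (n + 1), (b + n + 1).choose s + (b + n + 1).choose (n + 1) := by
          rw [ih, Nat.choose_symm_of_eq_add (add_assoc b n 1)]
      _ = ∑ s ∈ range (n + 2), (b + (n + 1) + 1).choose s :=
          (Nat.sum_range_succ_choose_succ _ n).symm

theorem sum_two_pow_choose_general (A B : ℕ) (hAB : B ≤ A) :
    ∑ ℓ ∈ Finset.range (A - B + 1), 2^ℓ * (A - ℓ).choose B =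
      ∑ s ∈ Finset.range (A - B + 1), (A + 1).choose s := by
  obtain ⟨n, rfl⟩ := Nat.exists_eq_add_of_le hAB
  simpa only [Nat.add_sub_cancel_left] using Nat.sum_range_two_pow_mul_choose B n

theorem sum_two_pow_choose (A B : ℕ) (hA : 1 ≤ A) (hB : 1 ≤ B) (hAB : B ≤ A) :
    ∑ ℓ ∈ Finset.range (A - B + 1), 2^ℓ * (A - ℓ).choose B =
      ∑ s ∈ Finset.range (A - B + 1), (A + 1).choose s :=
  sum_two_pow_choose_general A B hAB
end

section
/- Define b̃_n = (3n+5)·2^{2n−2} − 2(3n−1)·C(2n−2, n−1) for integers n ≥ 2. Then for every integer n ≥ 4, (n−1)·( b̃_n − 8·b̃_{n−1} + 16·b̃_{n−2} ) = 24·C(2n−6, n−2). -/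
/-!
Writing `c_k` for the central binomial coefficient, `b̃_(k+1) = (3k+8)·4^k - 2(3k+2)·c_k`.
The power part has a coefficient linear in `k`, so the operator `(E - 4)²` annihilates it.
For the central binomial part, `(k+1)·c_(k+1) = 2(2k+1)·c_k` turns the claim into a polynomial
identity in `k` times `c_k / (k+1)`, and `(k+1)·C(2k, k+1) = k·c_k` identifies the right-hand side.
-/

open Nat

/-- The number of basic ideals in the affine Lie algebra of type `B̃_n`. -/
def btilde (n : ℕ) : ℤ :=
  (3*(n : ℤ) + 5) * 2^(2*n-2) - 2*(3*(n : ℤ) - 1) * ((2*n-2).choose (n-1) : ℤ)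

lemma btilde_add_one (k : ℕ) :
    btilde (k + 1) = (3 * k + 8) * 4 ^ k - 2 * (3 * k + 2) * (centralBinom k : ℤ) := by
  have hexp : 2 * (k + 1) - 2 = 2 * k := by omega
  rw [btilde, hexp, pow_mul, Nat.add_sub_cancel, centralBinom_eq_two_mul_choose]
  push_cast
  ring

lemma succ_mul_choose_two_mul_succ (k : ℕ) :
    (k + 1) * (2 * k).choose (k + 1) = k * centralBinom k := by
  have h := choose_succ_right_eq (2 * k) k
  rw [show 2 * k - k = k by omega] at h
  rw [centralBinom_eq_two_mul_choose, mul_comm, h, mul_comm]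

lemma centralBinom_recurrence (k : ℕ) :
    ((k : ℤ) + 2) * ((3 * k + 8) * centralBinom (k + 2) - 8 * (3 * k + 5) * centralBinom (k + 1)
      + 16 * (3 * k + 2) * centralBinom k) = -12 * ((2 * k).choose (k + 1) : ℤ) := by
  have h₁ : ((k : ℤ) + 1) * centralBinom (k + 1) = 2 * (2 * k + 1) * centralBinom k := by
    exact_mod_cast succ_mul_centralBinom_succ k
  have h₂ : ((k : ℤ) + 2) * centralBinom (k + 2) = 2 * (2 * k + 3) * centralBinom (k + 1) := by
    exact_mod_cast succ_mul_centralBinom_succ (k + 1)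
  have h₀ : ((k : ℤ) + 1) * (2 * k).choose (k + 1) = k * centralBinom k := by
    exact_mod_cast succ_mul_choose_two_mul_succ k
  refine mul_left_cancel₀ (show (k : ℤ) + 1 ≠ 0 by positivity) ?_
  linear_combination ((k : ℤ) + 1) * (3 * k + 8) * h₂
    + (2 * (2 * k + 3) * (3 * k + 8) - 8 * (3 * k + 5) * (k + 2)) * h₁ + 12 * h₀

/-- The sequence `b̃_n` satisfies the nonhomogeneous linear recurrence
`b̃_n - 8·b̃_{n-1} + 16·b̃_{n-2} = 24/(n-1) · C(2n-6, n-2)` for `n ≥ 4`. -/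
theorem btilde_recurrence (n : ℕ) (hn : 4 ≤ n) :
    ((n : ℤ) - 1) * (btilde n - 8 * btilde (n-1) + 16 * btilde (n-2)) =
      24 * ((2*n-6).choose (n-2) : ℤ) := by
  obtain ⟨k, rfl⟩ : ∃ k, n = k + 3 := ⟨n - 3, by omega⟩
  rw [show k + 3 = k + 2 + 1 by rfl, show k + 2 + 1 - 1 = k + 1 + 1 by omega,
    show k + 2 + 1 - 2 = k + 1 by omega, show 2 * (k + 2 + 1) - 6 = 2 * k by omega,
    btilde_add_one, btilde_add_one, btilde_add_one]
  push_cast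
  linear_combination (-2) * centralBinom_recurrence k
end

section
/- For all integers n ≥ 3, k with 1 ≤ k ≤ n−2, and b with 0 ≤ b ≤ n−2, ∑_{j=1}^{b} (j−1)²·( C(n+b−j−k−2, n−k−2) − C(n+b−j−k−2, n−2) ) = C(n+b−k−1, n−k+1) + C(n+b−k−2, n−k+1) − C(n+b−k−1, n+1) − C(n+b−k−2, n+1). -/
open Finset

lemma intChoose_eq_zero_of_lt {m r : ℤ} (h : m < r) : intChoose m r = 0 :=
  if_neg (by omega)

theorem Nat.sum_antidiagonal_choose_mul_choose (a b N : ℕ) :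
    ∑ p ∈ antidiagonal N, p.1.choose a * p.2.choose b = (N + 1).choose (a + b + 1) := by
  induction N generalizing a with
  | zero => rcases a with _ | _ | a <;> rcases b with _ | b <;> simp [Nat.choose_eq_zero_of_lt]
  | succ N ih =>
    rw [Nat.sum_antidiagonal_succ]
    cases a with
    | zero =>
      have ih₀ := ih 0
      simp only [Nat.choose_zero_right, one_mul] at ih₀ ⊢
      rw [ih₀, Nat.choose_succ_succ' (N + 1), zero_add, add_comm]
    | succ a =>
      simp only [Nat.choose_succ_succ', add_mul, sum_add_distrib, ih, Nat.choose_zero_succ,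
        zero_mul, zero_add]
      rw [← Nat.choose_succ_succ']
      ring_nf

lemma Nat.sq_eq_two_mul_choose_two_add (i : ℕ) : i ^ 2 = 2 * i.choose 2 + i := by
  induction i with
  | zero => rfl
  | succ i ih => rw [Nat.choose_succ_succ', Nat.choose_one_right]; linarith

theorem Nat.sum_antidiagonal_sq_mul_choose (s N : ℕ) :
    ∑ p ∈ antidiagonal N, p.1 ^ 2 * p.2.choose s =
      2 * (N + 1).choose (s + 3) + (N + 1).choose (s + 2) := by
  have h2 := Nat.sum_antidiagonal_choose_mul_choose 2 s N
  have h1 := Nat.sum_antidiagonal_choose_mul_choose 1 s N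
  simp only [Nat.choose_one_right] at h1
  simp only [Nat.sq_eq_two_mul_choose_two_add, add_mul, mul_assoc, sum_add_distrib, ← mul_sum,
    h1, h2]
  ring_nf

lemma sum_Icc_sq_mul_intChoose (M s b : ℕ) (h : M ≤ s + b) :
    ∑ j ∈ Icc 1 b, ((j : ℤ) - 1) ^ 2 * intChoose ((M : ℤ) - j) s =
      2 * (M.choose (s + 3) : ℤ) + M.choose (s + 2) := by
  set f : ℕ → ℤ := fun j ↦ ((j : ℤ) - 1) ^ 2 * intChoose ((M : ℤ) - j) s
  have hf : ∀ j, b < j ∨ M < j → f j = 0 := fun j hj ↦ by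
    simp only [f, intChoose_eq_zero_of_lt (by omega : (M : ℤ) - j < s), mul_zero]
  calc ∑ j ∈ Icc 1 b, f j
      = ∑ j ∈ Icc 1 M, f j := by
        rw [sum_subset (Icc_subset_Icc_right (by omega : b ≤ M + b))
            (fun j hj₁ hj₂ ↦ hf j (by simp only [mem_Icc, not_and, not_le] at hj₁ hj₂; omega)),
          ← sum_subset (Icc_subset_Icc_right (by omega : M ≤ M + b))
            (fun j hj₁ hj₂ ↦ hf j (by simp only [mem_Icc, not_and, not_le] at hj₁ hj₂; omega))]
    _ = 2 * (M.choose (s + 3) : ℤ) + M.choose (s + 2) := by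
        cases M with
        | zero => simp
        | succ N =>
          rw [← Ico_add_one_right_eq_Icc, sum_Ico_eq_sum_range, Nat.add_sub_cancel,
            ← Nat.sum_antidiagonal_eq_sum_range_succ_mk fun p ↦ f (1 + p.1)]
          have hnat := congrArg (Nat.cast : ℕ → ℤ) (Nat.sum_antidiagonal_sq_mul_choose s N)
          push_cast at hnat
          rw [← hnat]
          refine sum_congr rfl fun p hp ↦ ?_
          rw [HasAntidiagonal.mem_antidiagonal] at hp
          simp only [f]
          rw [show ((N + 1 : ℕ) : ℤ) - (1 + p.1 : ℕ) = p.2 by omega, intChoose_natCast]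
          push_cast
          ring

theorem sum_j_choose_identity_general (n k b : ℕ) (hn : 3 ≤ n) (hk2 : k ≤ n-2) :
    ∑ j ∈ Finset.Icc 1 b, ((j : ℤ) - 1)^2 *
        (intChoose ((n:ℤ) + b - j - k - 2) ((n:ℤ) - k - 2) -
          intChoose ((n:ℤ) + b - j - k - 2) ((n:ℤ) - 2)) =
      intChoose ((n:ℤ) + b - k - 1) ((n:ℤ) - k + 1) +
        intChoose ((n:ℤ) + b - k - 2) ((n:ℤ) - k + 1) -
        intChoose ((n:ℤ) + b - k - 1) ((n:ℤ) + 1) -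
        intChoose ((n:ℤ) + b - k - 2) ((n:ℤ) + 1) := by
  obtain ⟨r, rfl⟩ : ∃ r, n = r + k + 2 := ⟨n - k - 2, by omega⟩
  have hcast : ∀ j : ℤ, ((r + k + 2 : ℕ) : ℤ) + b - j - k - 2 = (r + b : ℕ) - j := fun j ↦ by
    push_cast; ring
  simp only [hcast, mul_sub, sum_sub_distrib,
    show ((r + k + 2 : ℕ) : ℤ) - k - 2 = r by push_cast; ring,
    show ((r + k + 2 : ℕ) : ℤ) - 2 = (r + k : ℕ) by push_cast; ring,
    show ((r + k + 2 : ℕ) : ℤ) + b - k - 1 = (r + b + 1 : ℕ) by push_cast; ring,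
    show ((r + k + 2 : ℕ) : ℤ) + b - k - 2 = (r + b : ℕ) by push_cast; ring,
    show ((r + k + 2 : ℕ) : ℤ) - k + 1 = (r + 3 : ℕ) by push_cast; ring,
    show ((r + k + 2 : ℕ) : ℤ) + 1 = (r + k + 3 : ℕ) by push_cast; ring]
  rw [sum_Icc_sq_mul_intChoose _ _ _ le_rfl, sum_Icc_sq_mul_intChoose _ _ _ (by omega)]
  simp only [intChoose_natCast, Nat.choose_succ_succ' (r + b) (r + 2),
    Nat.choose_succ_succ' (r + b) (r + k + 2)]
  push_cast
  ring

theorem sum_j_choose_identity (n k b : ℕ) (hn : 3 ≤ n) (hk1 : 1 ≤ k) (hk2 : k ≤ n-2)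
    (hb : b ≤ n-2) :
    ∑ j ∈ Finset.Icc 1 b, ((j : ℤ) - 1)^2 *
        (intChoose ((n:ℤ) + b - j - k - 2) ((n:ℤ) - k - 2) -
          intChoose ((n:ℤ) + b - j - k - 2) ((n:ℤ) - 2)) =
      intChoose ((n:ℤ) + b - k - 1) ((n:ℤ) - k + 1) +
        intChoose ((n:ℤ) + b - k - 2) ((n:ℤ) - k + 1) -
        intChoose ((n:ℤ) + b - k - 1) ((n:ℤ) + 1) -
        intChoose ((n:ℤ) + b - k - 2) ((n:ℤ) + 1) :=
  sum_j_choose_identity_general n k b hn hk2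
end
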